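/- arXiv:1511.09391 — 2 statements merged into one kernel-verified Lean document; each statement's English description precedes it below -/
import Mathlib

section
/- Let Λ be a hereditary artin algebra and N = ⊕ᵢ Nᵢ a normal module without self-extensions, with Nᵢ indecomposable, and let Δ(i) be the cokernel of a minimal right add({N_j : j ≠ i})-approximation Uᵢ → Nᵢ. Then for i ≠ j every homomorphism Δ(j) → Δ(i) is zero; hence {Δ(i)} is an antichain in mod Λ. -/
open CategoryTheory

section Defs

variable (Λ : Type) [Ring Λ]

/-- `Ext¹(M, N) = 0`: every short exact sequence `0 → N → E → M → 0` splits. -/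
def ExtVanish (M N : Type) [AddCommGroup M] [Module Λ M] [AddCommGroup N] [Module Λ N] : Prop :=
  ∀ (E : Type) [AddCommGroup E] [Module Λ E] (f : N →ₗ[Λ] E) (g : E →ₗ[Λ] M),
    Function.Injective f → Function.Surjective g → LinearMap.range f = LinearMap.ker g →
    ∃ s : M →ₗ[Λ] E, g.comp s = LinearMap.id

/-- `X` generates `Y`: `Y` is a quotient of a finite direct sum of copies of `X`. -/
def Generates (X Y : Type) [AddCommGroup X] [Module Λ X] [AddCommGroup Y] [Module Λ Y] : Prop :=
  ∃ (n : ℕ) (g : (Fin n → X) →ₗ[Λ] Y), Function.Surjective g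

/-- `X` cogenerates `Y`: `Y` embeds into a finite direct sum of copies of `X`. -/
def Cogenerates (X Y : Type) [AddCommGroup X] [Module Λ X] [AddCommGroup Y] [Module Λ Y] : Prop :=
  ∃ (n : ℕ) (f : Y →ₗ[Λ] (Fin n → X)), Function.Injective f

/-- The endomorphism ring of `M` is a division ring. -/
def IsBrick (M : Type) [AddCommGroup M] [Module Λ M] : Prop :=
  (0 : Module.End Λ M) ≠ 1 ∧ ∀ f : Module.End Λ M, f ≠ 0 → IsUnit f

/-- `X ∈ add T`. -/
def InAdd (T X : Type) [AddCommGroup T] [Module Λ T] [AddCommGroup X] [Module Λ X] : Prop :=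
  ∃ (m : ℕ) (ι : X →ₗ[Λ] (Fin m → T)) (p : (Fin m → T) →ₗ[Λ] X), p.comp ι = LinearMap.id

/-- A module is normal if in any decomposition `M ≅ M' ⊕ M''` with `M'` generating `M''`,
the summand `M''` vanishes. -/
def IsNormal (M : Type) [AddCommGroup M] [Module Λ M] : Prop :=
  ∀ (M' M'' : Type) [AddCommGroup M'] [Module Λ M'] [AddCommGroup M''] [Module Λ M''],
    Nonempty (M ≃ₗ[Λ] M' × M'') → Generates Λ M' M'' → Subsingleton M''

/-- `N` is a normalization of `M`. -/
def IsNormalization (M N : Type) [AddCommGroup M] [Module Λ M] [AddCommGroup N] [Module Λ N] :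
    Prop :=
  IsNormal Λ N ∧ ∃ Y : ModuleCat.{0} Λ, Nonempty (M ≃ₗ[Λ] N × Y) ∧ Generates Λ N Y

/-- An indecomposable (nonzero) module. -/
def Indec (M : Type) [AddCommGroup M] [Module Λ M] : Prop :=
  ¬ Subsingleton M ∧ ∀ (P Q : Type) [AddCommGroup P] [Module Λ P] [AddCommGroup Q] [Module Λ Q],
    Nonempty (M ≃ₗ[Λ] P × Q) → Subsingleton P ∨ Subsingleton Q

/-- `S` is a composition factor of `M` (a subquotient, which for simple `S` is the same). -/
def IsCompositionFactor (M S : Type) [AddCommGroup M] [Module Λ M] [AddCommGroup S]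
    [Module Λ S] : Prop :=
  ∃ (B A : Submodule Λ M), A ≤ B ∧
    Nonempty ((B ⧸ Submodule.comap B.subtype A) ≃ₗ[Λ] S)

/-- Every simple module occurs as a composition factor of `M`. -/
def IsSincere (M : Type) [AddCommGroup M] [Module Λ M] : Prop :=
  ∀ (S : Type) [AddCommGroup S] [Module Λ S], IsSimpleModule Λ S → IsCompositionFactor Λ M S

/-- Submodules of projective modules are projective. -/
def IsHereditaryRing : Prop :=
  ∀ (P : Type) [AddCommGroup P] [Module Λ P], Module.Projective Λ P →
    ∀ N : Submodule Λ P, Module.Projective Λ N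

/-- A finite family of pairwise orthogonal bricks. -/
def IsAntichainFam (t : ℕ) (A : Fin t → Type) [∀ i, AddCommGroup (A i)]
    [∀ i, Module Λ (A i)] : Prop :=
  (∀ i, IsBrick Λ (A i)) ∧ ∀ i j, i ≠ j → ∀ f : A i →ₗ[Λ] A j, f = 0

/-- The antichain is exceptional: it can be reindexed so that `Ext¹(A i, A j) = 0` for `i ≥ j`,
i.e. its Ext-quiver is acyclic. -/
def IsExceptionalFam (t : ℕ) (A : Fin t → Type) [∀ i, AddCommGroup (A i)]
    [∀ i, Module Λ (A i)] : Prop :=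
  ∃ σ : Equiv.Perm (Fin t), ∀ i j : Fin t, j ≤ i → ExtVanish Λ (A (σ i)) (A (σ j))

/-- `M` has a finite filtration with successive quotients among the `A j`. -/
def HasFiltration (t : ℕ) (A : Fin t → Type) [∀ i, AddCommGroup (A i)] [∀ i, Module Λ (A i)]
    (M : Type) [AddCommGroup M] [Module Λ M] : Prop :=
  ∃ (s : ℕ) (F : Fin (s + 1) → Submodule Λ M), Monotone F ∧ F 0 = ⊥ ∧ F (Fin.last s) = ⊤ ∧
    ∀ i : Fin s, ∃ j : Fin t,
      Nonempty ((F i.succ ⧸ Submodule.comap (F i.succ).subtype (F i.castSucc)) ≃ₗ[Λ] A j)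

/-- The subcategory `F(A)` of modules filtered by the antichain `A`. -/
def FiltClass (t : ℕ) (A : Fin t → Type) [∀ i, AddCommGroup (A i)] [∀ i, Module Λ (A i)] :
    Set (ModuleCat.{0} Λ) :=
  {M | HasFiltration Λ t A M}

/-- A thick subcategory of `mod Λ`: closed under isomorphisms, finite direct sums, direct
summands, kernels, cokernels and extensions. -/
structure IsThick (𝒜 : Set (ModuleCat.{0} Λ)) : Prop where
  respIso : ∀ M N : ModuleCat.{0} Λ, (M ≃ₗ[Λ] N) → M ∈ 𝒜 → N ∈ 𝒜
  zero : ModuleCat.of Λ PUnit ∈ 𝒜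
  prod : ∀ M N : ModuleCat.{0} Λ, M ∈ 𝒜 → N ∈ 𝒜 → ModuleCat.of Λ (M × N) ∈ 𝒜
  summand : ∀ (M N : ModuleCat.{0} Λ), M ∈ 𝒜 →
    (∃ (ι : N →ₗ[Λ] M) (p : M →ₗ[Λ] N), p.comp ι = LinearMap.id) → N ∈ 𝒜
  ker : ∀ (M N : ModuleCat.{0} Λ) (f : M →ₗ[Λ] N), M ∈ 𝒜 → N ∈ 𝒜 →
    ModuleCat.of Λ (LinearMap.ker f) ∈ 𝒜
  coker : ∀ (M N : ModuleCat.{0} Λ) (f : M →ₗ[Λ] N), M ∈ 𝒜 → N ∈ 𝒜 →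
    ModuleCat.of Λ (N ⧸ LinearMap.range f) ∈ 𝒜
  extClosed : ∀ (M E N : ModuleCat.{0} Λ) (f : M →ₗ[Λ] E) (g : E →ₗ[Λ] N),
    Function.Injective f → Function.Surjective g → LinearMap.range f = LinearMap.ker g →
    M ∈ 𝒜 → N ∈ 𝒜 → E ∈ 𝒜

/-- A simple object of the (abelian) subcategory `𝒜`. -/
def IsSimpleIn (𝒜 : Set (ModuleCat.{0} Λ)) (M : ModuleCat.{0} Λ) : Prop :=
  M ∈ 𝒜 ∧ ¬ Subsingleton M ∧
    ∀ N : Submodule Λ M, ModuleCat.of Λ N ∈ 𝒜 → N = ⊥ ∨ N = ⊤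

/-- `C` is a cover of the subcategory `𝒜`. -/
def IsCoverOf (𝒜 : Set (ModuleCat.{0} Λ)) (C : ModuleCat.{0} Λ) : Prop :=
  C ∈ 𝒜 ∧ ∀ M ∈ 𝒜, Generates Λ C M

/-- `C` is a cocover of the subcategory `𝒜`. -/
def IsCocoverOf (𝒜 : Set (ModuleCat.{0} Λ)) (C : ModuleCat.{0} Λ) : Prop :=
  C ∈ 𝒜 ∧ ∀ M ∈ 𝒜, Cogenerates Λ C M

/-- A torsion class: a class of modules closed under quotients and extensions. -/
def IsTorsionClass (𝒞 : Set (ModuleCat.{0} Λ)) : Prop :=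
  (∀ M ∈ 𝒞, ∀ (N : ModuleCat.{0} Λ) (f : M →ₗ[Λ] N), Function.Surjective f → N ∈ 𝒞) ∧
  (∀ (M E N : ModuleCat.{0} Λ) (f : M →ₗ[Λ] E) (g : E →ₗ[Λ] N),
    Function.Injective f → Function.Surjective g → LinearMap.range f = LinearMap.ker g →
    M ∈ 𝒞 → N ∈ 𝒞 → E ∈ 𝒞)

/-- `𝒢(T)`: the (finite length) modules generated by `T`. -/
def GenClass (T : Type) [AddCommGroup T] [Module Λ T] : Set (ModuleCat.{0} Λ) :=
  {M | IsFiniteLength Λ M ∧ Generates Λ T M}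

/-- Membership in the two-sided ideal of `Λ` generated by the idempotents annihilating `M`. -/
def InSupportIdeal (M : Type) [AddCommGroup M] [Module Λ M] (a : Λ) : Prop :=
  ∃ (n : ℕ) (x y e : Fin n → Λ),
    (∀ i, IsIdempotentElem (e i) ∧ ∀ m : M, e i • m = 0) ∧ a = ∑ i, x i * e i * y i

end Defs

/-- `T` is a tilting `R`-module: no self-extensions, and `R` is the kernel of a surjective
map in `add T`. -/
def IsTiltingMod (R : Type) [Ring R] (T : Type) [AddCommGroup T] [Module R T] : Prop :=
  ExtVanish R T T ∧
    ∃ X Y : ModuleCat.{0} R, InAdd R T X ∧ InAdd R T Y ∧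
      ∃ (f : R →ₗ[R] X) (g : X →ₗ[R] Y),
        Function.Injective f ∧ Function.Surjective g ∧ LinearMap.range f = LinearMap.ker g

/-- `T` is support-tilting: `T` is a tilting module over its support algebra `Λ(T)`
(presented as any quotient of `Λ` by the ideal generated by the idempotents killing `T`). -/
def IsSupportTilting (Λ : Type) [Ring Λ] (T : Type) [AddCommGroup T] [Module Λ T] : Prop :=
  ∀ (R : Type) [Ring R] (π : Λ →+* R), Function.Surjective π →
    (∀ a : Λ, π a = 0 ↔ InSupportIdeal Λ T a) →
    ∀ [Module R T], (∀ (a : Λ) (x : T), a • x = π a • x) → IsTiltingMod R T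

section MoreDefs
variable (Λ : Type) [Ring Λ]

/-- A factor complement `Y` for `N`: `Y` is generated by `N` and `N ⊕ Y` is support-tilting. -/
def IsFactorComplement (N Y : Type) [AddCommGroup N] [Module Λ N] [AddCommGroup Y]
    [Module Λ Y] : Prop :=
  Generates Λ N Y ∧ IsSupportTilting Λ (N × Y)

/-- A minimal factor complement: a factor complement all of whose factor-complement direct
summands are Morita equivalent to it. -/
def IsMinimalFactorComplement (N Y : Type) [AddCommGroup N] [Module Λ N] [AddCommGroup Y]
    [Module Λ Y] : Prop :=
  IsFactorComplement Λ N Y ∧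
    ∀ Y' : ModuleCat.{0} Λ, InAdd Λ Y Y' → IsFactorComplement Λ N Y' → InAdd Λ Y' Y

/-- `Λ` is representation-finite. -/
def IsRepFinite : Prop :=
  ∃ (t : ℕ) (R : Fin t → ModuleCat.{0} Λ),
    ∀ M : ModuleCat.{0} Λ, IsFiniteLength Λ M → Indec Λ M → ∃ i, Nonempty (M ≃ₗ[Λ] R i)

end MoreDefs
section ExtraDefs
variable (Λ : Type) [Ring Λ]

/-- `X ∈ add {Nf j : j ∈ S}`. -/
def InAddFam (t : ℕ) (Nf : Fin t → Type) [∀ i, AddCommGroup (Nf i)] [∀ i, Module Λ (Nf i)]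
    (S : Set (Fin t)) (X : Type) [AddCommGroup X] [Module Λ X] : Prop :=
  ∃ (m : ℕ) (c : Fin m → Fin t), (∀ a, c a ∈ S) ∧
    ∃ (ι : X →ₗ[Λ] ∀ a, Nf (c a)) (p : (∀ a, Nf (c a)) →ₗ[Λ] X), p.comp ι = LinearMap.id

/-- `X` is killed by the support ideal of `N`, i.e. `X` is a module over the
support algebra `Λ(N)`. -/
def KilledBySupportIdeal (N X : Type) [AddCommGroup N] [Module Λ N] [AddCommGroup X]
    [Module Λ X] : Prop :=
  ∀ a : Λ, InSupportIdeal Λ N a → ∀ x : X, a • x = 0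

end ExtraDefs

/-- An equivalence (automatically exact) between the abelian category `𝒜` and the category
of finite length modules over an artin algebra `B`. -/
structure ArtinAlgebraModel (Λ : Type) [Ring Λ] (𝒜 : Set (ModuleCat.{0} Λ)) where
  k' : Type
  [ck' : CommRing k']
  [ak' : IsArtinianRing k']
  B : Type
  [rB : Ring B]
  [algB : Algebra k' B]
  flB : IsFiniteLength k' B
  equiv : CategoryTheory.ObjectProperty.FullSubcategory (fun M : ModuleCat.{0} Λ => M ∈ 𝒜) ≌
    CategoryTheory.ObjectProperty.FullSubcategory (fun M : ModuleCat.{0} B => IsFiniteLength B M)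

/-- The hom-space from `x` to `y` in the linearization `kP` of a poset `P` over a field `k`:
it is `k` if `x ≤ y` and `0` otherwise; composition is multiplication in `k`. -/
def pHom (kk P : Type) [Field kk] [PartialOrder P] (x y : P) : Type :=
  {c : kk // ¬ x ≤ y → c = 0}

/-!
Since `Λ` is hereditary, `Ext¹(N_j, -)` is right exact, so `Ext¹(N_j, im u_i) = 0`: the image is a
quotient of `U_i ∈ add N`. Hence every map `N_j → Δ(i)` lifts to `N_j → N_i`. For `j ≠ i` the lift
factors through the approximation `u_i`, so it vanishes in `Δ(i)`. For `j = i`, an endomorphism of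
`Δ(i)` lifts to one of `N_i`, and the endomorphism ring of the rigid indecomposable `N_i` is a
division ring (Happel–Ringel). Finally `Δ(i) ≠ 0`, since otherwise `⊕_{j ≠ i} N_j` would generate
`N_i`, against normality.
-/

open Function

section

variable {Λ : Type} [Ring Λ]

theorem LinearMap.exists_comp_eq_of_ker_le {A B C : Type} [AddCommGroup A] [Module Λ A]
    [AddCommGroup B] [Module Λ B] [AddCommGroup C] [Module Λ C] {f : A →ₗ[Λ] B}
    (hf : Surjective f) (φ : A →ₗ[Λ] C) (h : ker f ≤ ker φ) : ∃ ψ : B →ₗ[Λ] C, ψ ∘ₗ f = φ :=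
  ⟨(ker f).liftQ φ h ∘ₗ (f.quotKerEquivOfSurjective hf).symm.toLinearMap, by
    ext x
    simp [LinearMap.quotKerEquivOfSurjective_symm_apply]⟩

/-- For a presentation `Ω ↪ F ↠ M` with `F` projective, this is `Ext¹(M, N) = 0`. -/
def Submodule.HomExtends {F : Type} [AddCommGroup F] [Module Λ F] (Ω : Submodule Λ F)
    (N : Type) [AddCommGroup N] [Module Λ N] : Prop :=
  ∀ ψ : Ω →ₗ[Λ] N, ∃ Ψ : F →ₗ[Λ] N, Ψ ∘ₗ Ω.subtype = ψ

namespace Submodule.HomExtends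

variable {F : Type} [AddCommGroup F] [Module Λ F] {Ω : Submodule Λ F}

theorem pi {ι : Type} {X : ι → Type} [∀ a, AddCommGroup (X a)] [∀ a, Module Λ (X a)]
    (h : ∀ a, Ω.HomExtends (X a)) : Ω.HomExtends (∀ a, X a) := by
  intro ψ
  choose Ψ hΨ using fun a => h a (LinearMap.proj a ∘ₗ ψ)
  exact ⟨LinearMap.pi Ψ, by ext w a; exact LinearMap.congr_fun (hΨ a) w⟩

theorem of_retract {N N' : Type} [AddCommGroup N] [Module Λ N] [AddCommGroup N'] [Module Λ N']
    (h : Ω.HomExtends N) (ι : N' →ₗ[Λ] N) (p : N →ₗ[Λ] N') (hpι : p ∘ₗ ι = LinearMap.id) :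
    Ω.HomExtends N' := by
  intro ψ
  obtain ⟨Ψ, hΨ⟩ := h (ι ∘ₗ ψ)
  refine ⟨p ∘ₗ Ψ, ?_⟩
  rw [LinearMap.comp_assoc, hΨ, ← LinearMap.comp_assoc, hpι, LinearMap.id_comp]

theorem of_surjective [Module.Projective Λ Ω] {N K : Type} [AddCommGroup N] [Module Λ N]
    [AddCommGroup K] [Module Λ K] (h : Ω.HomExtends N) {q : N →ₗ[Λ] K} (hq : Surjective q) :
    Ω.HomExtends K := by
  intro ψ
  obtain ⟨ψ', hψ'⟩ := Module.projective_lifting_property q ψ hq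
  obtain ⟨Ψ, hΨ⟩ := h ψ'
  exact ⟨q ∘ₗ Ψ, by rw [LinearMap.comp_assoc, hΨ, hψ']⟩

/-- Lift `φ ∘ pres` to `σ : F → E`; on `Ω` it lands in `K`, so it can be corrected by an extension
of `σ|Ω` to `F`, and the difference factors through `pres`. -/
theorem exists_lift [Module.Projective Λ F] {M K E M' : Type} [AddCommGroup M] [Module Λ M]
    [AddCommGroup K] [Module Λ K] [AddCommGroup E] [Module Λ E] [AddCommGroup M'] [Module Λ M']
    {pres : F →ₗ[Λ] M} (hpres : Surjective pres) (h : (LinearMap.ker pres).HomExtends K)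
    {f : K →ₗ[Λ] E} {g : E →ₗ[Λ] M'} (hf : Injective f) (hg : Surjective g)
    (hfg : LinearMap.range f = LinearMap.ker g) (φ : M →ₗ[Λ] M') :
    ∃ ψ : M →ₗ[Λ] E, g ∘ₗ ψ = φ := by
  have hgf : g ∘ₗ f = 0 := LinearMap.range_le_ker_iff.mp hfg.le
  obtain ⟨σ, hσ⟩ := Module.projective_lifting_property g (φ ∘ₗ pres) hg
  have hσΩ : ∀ w : LinearMap.ker pres, σ w ∈ LinearMap.range f := fun w => by
    rw [hfg, LinearMap.mem_ker, ← LinearMap.comp_apply, hσ, LinearMap.comp_apply,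
      LinearMap.mem_ker.mp w.2, map_zero]
  obtain ⟨Ψ, hΨ⟩ := h ((LinearEquiv.ofInjective f hf).symm.toLinearMap ∘ₗ
    (σ ∘ₗ (LinearMap.ker pres).subtype).codRestrict _ hσΩ)
  have hfΨ : ∀ w : LinearMap.ker pres, f (Ψ w) = σ w := fun w => by
    rw [show Ψ w = _ from LinearMap.congr_fun hΨ w]
    exact LinearEquiv.ofInjective_symm_apply (h := hf) f _
  obtain ⟨ψ, hψ⟩ := LinearMap.exists_comp_eq_of_ker_le hpres (σ - f ∘ₗ Ψ) fun x hx => by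
    simp [hfΨ ⟨x, hx⟩]
  refine ⟨ψ, (LinearMap.cancel_right hpres).mp ?_⟩
  rw [LinearMap.comp_assoc, hψ, LinearMap.comp_sub, hσ, ← LinearMap.comp_assoc, hgf,
    LinearMap.zero_comp, sub_zero]

/-- A splitting of the pushout of `0 → Ω → F → M → 0` along `ψ` yields the extension of `ψ`. -/
theorem of_extVanish {M N : Type} [AddCommGroup M] [Module Λ M] [AddCommGroup N] [Module Λ N]
    {pres : F →ₗ[Λ] M} (hpres : Surjective pres) (h : ExtVanish Λ M N) :
    (LinearMap.ker pres).HomExtends N := by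
  intro ψ
  set R := LinearMap.range (ψ.prod (-(LinearMap.ker pres).subtype))
  have hR : ∀ (x : N) (y : F) (hy : pres y = 0), R.mkQ (x, y) = R.mkQ (x + ψ ⟨y, hy⟩, 0) := by
    intro x y hy
    rw [Submodule.mkQ_apply, Submodule.mkQ_apply, Submodule.Quotient.eq]
    exact ⟨-⟨y, hy⟩, by simp⟩
  have hRπ : R ≤ LinearMap.ker (pres ∘ₗ LinearMap.snd Λ N F) := by
    rintro _ ⟨w, rfl⟩
    simp [LinearMap.mem_ker.mp w.2]
  set ι := R.mkQ ∘ₗ LinearMap.inl Λ N F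
  set π := R.liftQ _ hRπ
  have hι : Injective ι := by
    rw [← LinearMap.ker_eq_bot, eq_bot_iff]
    intro x (hx : R.mkQ (x, 0) = 0)
    obtain ⟨w, hw⟩ := (Submodule.Quotient.mk_eq_zero R).mp hx
    have hw0 : w = 0 := by simpa using congrArg Prod.snd hw
    simpa [hw0] using (congrArg Prod.fst hw).symm
  have hπ : Surjective π := fun m => by
    obtain ⟨y, hy⟩ := hpres m
    exact ⟨R.mkQ (0, y), hy⟩
  have hιπ : LinearMap.range ι = LinearMap.ker π := by
    ext z
    obtain ⟨⟨x, y⟩, rfl⟩ := R.mkQ_surjective z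
    constructor
    · rintro ⟨x', hx'⟩
      rw [LinearMap.mem_ker, ← hx']
      simp [ι, π]
    · intro (hy : pres y = 0)
      exact ⟨x + ψ (⟨y, hy⟩ : LinearMap.ker pres), (hR x y hy).symm⟩
  obtain ⟨s, hs⟩ := h _ ι π hι hπ hιπ
  obtain ⟨r, hr⟩ : ∃ r, r ∘ₗ ι = LinearMap.id :=
    (((LinearMap.exact_iff.mpr hιπ.symm).split_tfae hι hπ).out 0 1).mp
      (⟨s, hs⟩ : ∃ l, π ∘ₗ l = LinearMap.id)
  refine ⟨r ∘ₗ R.mkQ ∘ₗ LinearMap.inr Λ N F, ?_⟩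
  ext w
  have := hR 0 w w.2
  simp only [LinearMap.comp_apply, LinearMap.inr_apply, Submodule.subtype_apply, this, zero_add]
  exact LinearMap.congr_fun hr (ψ w)

end Submodule.HomExtends

theorem extVanish_iff_homExtends {F M N : Type} [AddCommGroup F] [Module Λ F]
    [Module.Projective Λ F] [AddCommGroup M] [Module Λ M] [AddCommGroup N] [Module Λ N]
    {pres : F →ₗ[Λ] M} (hpres : Surjective pres) :
    ExtVanish Λ M N ↔ (LinearMap.ker pres).HomExtends N :=
  ⟨Submodule.HomExtends.of_extVanish hpres, fun h _ _ _ _ _ hf hg hfg =>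
    h.exists_lift hpres hf hg hfg LinearMap.id⟩

namespace ExtVanish

variable {M N : Type} [AddCommGroup M] [Module Λ M] [AddCommGroup N] [Module Λ N]

theorem iff_homExtends_ker_linearCombination :
    ExtVanish Λ M N ↔ (LinearMap.ker (Finsupp.linearCombination Λ (id : M → M))).HomExtends N :=
  extVanish_iff_homExtends (Finsupp.linearCombination_id_surjective Λ M)

theorem pi_right {ι : Type} {X : ι → Type} [∀ a, AddCommGroup (X a)] [∀ a, Module Λ (X a)]
    (h : ∀ a, ExtVanish Λ M (X a)) : ExtVanish Λ M (∀ a, X a) :=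
  iff_homExtends_ker_linearCombination.mpr
    (.pi fun a => iff_homExtends_ker_linearCombination.mp (h a))

theorem of_retract_right {N' : Type} [AddCommGroup N'] [Module Λ N'] (h : ExtVanish Λ M N)
    (ι : N' →ₗ[Λ] N) (p : N →ₗ[Λ] N') (hpι : p ∘ₗ ι = LinearMap.id) : ExtVanish Λ M N' :=
  iff_homExtends_ker_linearCombination.mpr
    ((iff_homExtends_ker_linearCombination.mp h).of_retract ι p hpι)

theorem of_surjective_right (hher : IsHereditaryRing Λ) {K : Type} [AddCommGroup K]
    [Module Λ K] (h : ExtVanish Λ M N) {q : N →ₗ[Λ] K} (hq : Surjective q) : ExtVanish Λ M K :=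
  have := hher _ inferInstance (LinearMap.ker (Finsupp.linearCombination Λ (id : M → M)))
  iff_homExtends_ker_linearCombination.mpr
    ((iff_homExtends_ker_linearCombination.mp h).of_surjective hq)

theorem exists_lift {K E M' : Type} [AddCommGroup K] [Module Λ K] [AddCommGroup E] [Module Λ E]
    [AddCommGroup M'] [Module Λ M'] (h : ExtVanish Λ M K) {f : K →ₗ[Λ] E} {g : E →ₗ[Λ] M'}
    (hf : Injective f) (hg : Surjective g) (hfg : LinearMap.range f = LinearMap.ker g)
    (φ : M →ₗ[Λ] M') : ∃ ψ : M →ₗ[Λ] E, g ∘ₗ ψ = φ :=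
  (iff_homExtends_ker_linearCombination.mp h).exists_lift
    (Finsupp.linearCombination_id_surjective Λ M) hf hg hfg φ

theorem of_retract_left {M' : Type} [AddCommGroup M'] [Module Λ M'] (h : ExtVanish Λ M N)
    (ι : M' →ₗ[Λ] M) (p : M →ₗ[Λ] M') (hpι : p ∘ₗ ι = LinearMap.id) : ExtVanish Λ M' N := by
  intro E _ _ f g hf hg hfg
  obtain ⟨ψ, hψ⟩ := h.exists_lift hf hg hfg p
  exact ⟨ψ ∘ₗ ι, by rw [← LinearMap.comp_assoc, hψ, hpι]⟩

theorem exists_mkQ_comp_eq {p : Submodule Λ N} (h : ExtVanish Λ M p) (g : M →ₗ[Λ] N ⧸ p) :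
    ∃ g' : M →ₗ[Λ] N, p.mkQ ∘ₗ g' = g :=
  h.exists_lift p.injective_subtype p.mkQ_surjective (by rw [p.range_subtype, p.ker_mkQ]) g

end ExtVanish

section Indecomposable

variable {M : Type} [AddCommGroup M] [Module Λ M]

/-- Fitting's lemma: `M = ker fⁿ ⊕ range fⁿ` for large `n`. -/
theorem Module.End.isNilpotent_of_not_surjective (hfl : IsFiniteLength Λ M)
    (hind : Indec Λ M) {f : Module.End Λ M} (hf : ¬ Surjective f) : IsNilpotent f := by
  obtain ⟨_, _⟩ := isFiniteLength_iff_isNoetherian_isArtinian.mp hfl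
  obtain ⟨n, hcompl, hn⟩ :=
    (f.eventually_isCompl_ker_pow_range_pow.and (Filter.eventually_ge_atTop 1)).exists
  rcases hind.2 _ _ ⟨(Submodule.prodEquivOfIsCompl _ _ hcompl).symm⟩ with h | h
  · rw [Submodule.subsingleton_iff_eq_bot] at h
    have htop := eq_top_of_bot_isCompl (h ▸ hcompl)
    refine absurd (LinearMap.range_eq_top.mp (top_le_iff.mp ?_)) hf
    obtain ⟨m, rfl⟩ := Nat.exists_eq_add_of_le' hn
    rw [← htop, pow_succ', Module.End.mul_eq_comp]
    exact LinearMap.range_comp_le_range _ _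
  · exact ⟨n, LinearMap.range_eq_bot.mp (Submodule.subsingleton_iff_eq_bot.mp h)⟩

/-- With `pres : F ↠ M` free and `Ω' = pres⁻¹(range g)`, projective since `Λ` is hereditary, lift
`pres : Ω' ↠ range g` through `g` to `ψ`, and extend `ψ|ker pres` to `Ψ : F → M` using
`Ext¹(M, M) = 0`. Then `ψ - Ψ` descends to `w : range g → M` with `g ∘ w = 1 - γ` on `range g`,
where `γ ∘ pres = g ∘ Ψ`. As `γ` lands in `range g ≠ M`, it is nilpotent (Fitting), so `1 - γ` is
invertible on `range g`. -/
theorem Module.End.exists_rangeRestrict_comp_eq_id_of_not_surjective (hher : IsHereditaryRing Λ)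
    (hfl : IsFiniteLength Λ M) (hind : Indec Λ M) (hEV : ExtVanish Λ M M) {g : Module.End Λ M}
    (hg : ¬ Surjective g) :
    ∃ s : LinearMap.range g →ₗ[Λ] M, g.rangeRestrict ∘ₗ s = LinearMap.id := by
  set I := LinearMap.range g
  set pres := Finsupp.linearCombination Λ (id : M → M)
  have hpres : Surjective pres := Finsupp.linearCombination_id_surjective Λ M
  set Ω' := I.comap pres
  have : Module.Projective Λ Ω' := hher _ inferInstance Ω'
  set ρ : Ω' →ₗ[Λ] I := pres.restrict fun _ hx => hx
  have hρ : Surjective ρ := fun y => by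
    obtain ⟨p, hp⟩ := hpres y
    exact ⟨⟨p, show pres p ∈ I from hp ▸ y.2⟩, Subtype.ext hp⟩
  obtain ⟨ψ, hψ⟩ := Module.projective_lifting_property g.rangeRestrict ρ g.surjective_rangeRestrict
  have hgψ : ∀ p, g (ψ p) = pres p := fun p => congrArg Subtype.val (LinearMap.congr_fun hψ p)
  have hΩ : LinearMap.ker pres ≤ Ω' := fun p (hp : pres p = 0) =>
    show pres p ∈ I from hp ▸ I.zero_mem
  obtain ⟨Ψ, hΨ⟩ := (extVanish_iff_homExtends hpres).mp hEV (ψ ∘ₗ Submodule.inclusion hΩ)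
  have hΨψ : ∀ p (hp : p ∈ LinearMap.ker pres), Ψ p = ψ ⟨p, hΩ hp⟩ := fun p hp =>
    LinearMap.congr_fun hΨ ⟨p, hp⟩
  obtain ⟨γ, hγ⟩ := LinearMap.exists_comp_eq_of_ker_le hpres (g ∘ₗ Ψ) fun p hp => by
    simp [hΨψ p hp, hgψ, LinearMap.mem_ker.mp hp]
  have hγI : ∀ x, γ x ∈ I := fun x => by
    obtain ⟨p, rfl⟩ := hpres x
    exact ⟨Ψ p, (LinearMap.congr_fun hγ p).symm⟩
  have hγnil : IsNilpotent γ := Module.End.isNilpotent_of_not_surjective hfl hind fun hsurj =>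
    hg fun x => by obtain ⟨y, rfl⟩ := hsurj x; exact hγI y
  have hker : LinearMap.ker ρ ≤ LinearMap.ker (ψ - Ψ ∘ₗ Ω'.subtype) := fun p hp => by
    have hp' : (p : M →₀ Λ) ∈ LinearMap.ker pres := congrArg Subtype.val (LinearMap.mem_ker.mp hp)
    simp [hΨψ p hp']
  obtain ⟨w, hw⟩ := LinearMap.exists_comp_eq_of_ker_le (A := Ω') (B := I) (f := ρ) hρ _ hker
  have hgw : ∀ y : I, g (w y) = y - γ y := fun y => by
    obtain ⟨p, rfl⟩ := hρ y
    have hwρ := LinearMap.congr_fun hw p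
    have hγp := LinearMap.congr_fun hγ p
    simp only [LinearMap.comp_apply, LinearMap.sub_apply, Submodule.subtype_apply] at hwρ hγp
    rw [hwρ, map_sub, hgψ, ← hγp]
    rfl
  obtain ⟨v, hv⟩ := (Module.End.isNilpotent.restrict (fun x _ => hγI x) hγnil).isUnit_one_sub
    |>.exists_right_inv
  refine ⟨w ∘ₗ v, LinearMap.ext fun y => Subtype.ext ?_⟩
  simpa [hgw] using congrArg Subtype.val (LinearMap.congr_fun hv y)

theorem Module.End.eq_zero_or_surjective_of_extVanish (hher : IsHereditaryRing Λ)
    (hfl : IsFiniteLength Λ M) (hind : Indec Λ M) (hEV : ExtVanish Λ M M) (f : Module.End Λ M) :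
    f = 0 ∨ Surjective f := by
  obtain ⟨_, _⟩ := isFiniteLength_iff_isNoetherian_isArtinian.mp hfl
  refine or_iff_not_imp_right.mpr fun hf => ?_
  obtain ⟨s, hs⟩ := exists_rangeRestrict_comp_eq_id_of_not_surjective hher hfl hind hEV hf
  obtain ⟨e, -, -⟩ := (((LinearMap.exact_subtype_ker_map f.rangeRestrict).split_tfae
    (LinearMap.ker _).injective_subtype f.surjective_rangeRestrict).out 0 2).mp
      (⟨s, hs⟩ : ∃ s, f.rangeRestrict ∘ₗ s = LinearMap.id)
  rcases hind.2 _ _ ⟨e⟩ with h | h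
  · rw [Submodule.subsingleton_iff_eq_bot, LinearMap.ker_rangeRestrict, LinearMap.ker_eq_bot] at h
    exact absurd (IsArtinian.surjective_of_injective_endomorphism f h) hf
  · exact LinearMap.range_eq_bot.mp (Submodule.subsingleton_iff_eq_bot.mp h)

theorem isBrick_of_extVanish_self (hher : IsHereditaryRing Λ) (hfl : IsFiniteLength Λ M)
    (hind : Indec Λ M) (hEV : ExtVanish Λ M M) : IsBrick Λ M := by
  obtain ⟨_, _⟩ := isFiniteLength_iff_isNoetherian_isArtinian.mp hfl
  have : Nontrivial M := not_subsingleton_iff_nontrivial.mp hind.1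
  refine ⟨zero_ne_one, fun f hf => ?_⟩
  have hsurj := (Module.End.eq_zero_or_surjective_of_extVanish hher hfl hind hEV f).resolve_left hf
  exact (Module.End.isUnit_iff f).mpr
    ⟨IsNoetherian.injective_of_surjective_endomorphism f hsurj, hsurj⟩

end Indecomposable

theorem Generates.of_surjective {X Y Z : Type} [AddCommGroup X] [Module Λ X] [AddCommGroup Y]
    [Module Λ Y] [AddCommGroup Z] [Module Λ Z] (h : Generates Λ X Y) {q : Y →ₗ[Λ] Z}
    (hq : Surjective q) : Generates Λ X Z :=
  let ⟨n, g, hg⟩ := h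
  ⟨n, q ∘ₗ g, hq.comp hg⟩

section Family

variable {t : ℕ} {Nf : Fin t → Type} [∀ i, AddCommGroup (Nf i)] [∀ i, Module Λ (Nf i)]

theorem InAddFam.of_mem {S : Set (Fin t)} {j : Fin t} (hj : j ∈ S) : InAddFam Λ t Nf S (Nf j) :=
  ⟨1, fun _ => j, fun _ => hj, LinearMap.pi fun _ => LinearMap.id, LinearMap.proj 0, by
    ext; simp⟩

theorem InAddFam.generates {S : Set (Fin t)} {X : Type} [AddCommGroup X] [Module Λ X]
    (h : InAddFam Λ t Nf S X) : Generates Λ (∀ j : S, Nf j) X := by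
  classical
  obtain ⟨m, c, hc, ι, p, hpι⟩ := h
  refine ⟨m, p ∘ₗ LinearMap.pi fun a => LinearMap.proj (⟨c a, hc a⟩ : S) ∘ₗ LinearMap.proj a, ?_⟩
  have hp : Surjective p := fun x => ⟨ι x, LinearMap.congr_fun hpι x⟩
  refine hp.comp fun z => ⟨fun a => Pi.single (⟨c a, hc a⟩ : S) (z a), ?_⟩
  ext a
  simp

theorem ExtVanish.of_inAddFam {S : Set (Fin t)} {M X : Type} [AddCommGroup M] [Module Λ M]
    [AddCommGroup X] [Module Λ X] (hN : ∀ k, ExtVanish Λ M (Nf k))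
    (h : InAddFam Λ t Nf S X) : ExtVanish Λ M X :=
  let ⟨_, _, _, ι, p, hpι⟩ := h
  (ExtVanish.pi_right fun _ => hN _).of_retract_right ι p hpι

theorem IsNormal.subsingleton_of_generates (hnorm : IsNormal Λ (∀ i, Nf i)) (i : Fin t)
    (h : Generates Λ (∀ j : ({j | j ≠ i} : Set (Fin t)), Nf j) (Nf i)) : Subsingleton (Nf i) := by
  classical
  let e : (∀ k, Nf k) ≃ₗ[Λ] Nf i × ∀ j : {j // j ≠ i}, Nf j :=
    { Equiv.piSplitAt i Nf with map_add' := fun _ _ => rfl, map_smul' := fun _ _ => rfl }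
  exact hnorm _ _ ⟨e.trans (LinearEquiv.prodComm Λ _ _)⟩ h

end Family

theorem IsBrick.quotient {N : Type} [AddCommGroup N] [Module Λ N] [IsNoetherian Λ N]
    (hN : IsBrick Λ N) {p : Submodule Λ N} (hp : p ≠ ⊤)
    (hlift : ∀ f : Module.End Λ (N ⧸ p), ∃ h : Module.End Λ N, p.mkQ ∘ₗ h = f ∘ₗ p.mkQ) :
    IsBrick Λ (N ⧸ p) := by
  have : Nontrivial (N ⧸ p) := Submodule.Quotient.nontrivial_iff.mpr hp
  refine ⟨zero_ne_one, fun f hf => ?_⟩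
  obtain ⟨h, hh⟩ := hlift f
  have hh0 : h ≠ 0 := fun h0 => hf <| (LinearMap.cancel_right p.mkQ_surjective).mp <| by
    rw [← hh, h0, LinearMap.comp_zero, LinearMap.zero_comp]
  have hsurj : Surjective f := by
    refine Surjective.of_comp (g := p.mkQ) ?_
    rw [← LinearMap.coe_comp, ← hh, LinearMap.coe_comp]
    exact p.mkQ_surjective.comp ((Module.End.isUnit_iff h).mp (hN.2 h hh0)).2
  exact (Module.End.isUnit_iff f).mpr
    ⟨IsNoetherian.injective_of_surjective_endomorphism f hsurj, hsurj⟩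

end

theorem stmt4_general (Λ : Type) [Ring Λ] (hher : IsHereditaryRing Λ)
    (t : ℕ) (Nf : Fin t → Type) [∀ i, AddCommGroup (Nf i)] [∀ i, Module Λ (Nf i)]
    (hfl : ∀ i, IsFiniteLength Λ (Nf i)) (hind : ∀ i, Indec Λ (Nf i))
    (hnorm : IsNormal Λ (∀ i, Nf i)) (hself : ExtVanish Λ (∀ i, Nf i) (∀ i, Nf i))
    (U : Fin t → Type) [∀ i, AddCommGroup (U i)] [∀ i, Module Λ (U i)]
    (u : ∀ i, U i →ₗ[Λ] Nf i)
    (hUadd : ∀ i, InAddFam Λ t Nf {j | j ≠ i} (U i))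
    (happrox : ∀ i, ∀ (X : Type) [AddCommGroup X] [Module Λ X],
      InAddFam Λ t Nf {j | j ≠ i} X →
      ∀ f : X →ₗ[Λ] Nf i, ∃ h : X →ₗ[Λ] U i, (u i).comp h = f) :
    (∀ i j, i ≠ j →
      ∀ f : (Nf j ⧸ LinearMap.range (u j)) →ₗ[Λ] (Nf i ⧸ LinearMap.range (u i)),
        f = 0) ∧
    IsAntichainFam Λ t (fun i => Nf i ⧸ LinearMap.range (u i)) := by
  have hN : ∀ j k, ExtVanish Λ (Nf j) (Nf k) := fun j k =>
    (hself.of_retract_left _ _ (LinearMap.proj_comp_single_same Λ Nf j)).of_retract_right _ _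
      (LinearMap.proj_comp_single_same Λ Nf k)
  have hlift : ∀ i j (g : Nf j →ₗ[Λ] Nf i ⧸ LinearMap.range (u i)),
      ∃ g' : Nf j →ₗ[Λ] Nf i, (LinearMap.range (u i)).mkQ ∘ₗ g' = g := fun i j =>
    ((ExtVanish.of_inAddFam (hN j) (hUadd i)).of_surjective_right hher
      (u i).surjective_rangeRestrict).exists_mkQ_comp_eq
  have horth : ∀ i j, i ≠ j →
      ∀ f : (Nf j ⧸ LinearMap.range (u j)) →ₗ[Λ] (Nf i ⧸ LinearMap.range (u i)), f = 0 := by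
    intro i j hij f
    obtain ⟨g', hg'⟩ := hlift i j (f ∘ₗ (LinearMap.range (u j)).mkQ)
    obtain ⟨h, rfl⟩ := happrox i (Nf j) (InAddFam.of_mem hij.symm) g'
    refine (LinearMap.cancel_right (LinearMap.range (u j)).mkQ_surjective).mp ?_
    rw [← hg', ← LinearMap.comp_assoc, LinearMap.range_mkQ_comp, LinearMap.zero_comp,
      LinearMap.zero_comp]
  refine ⟨horth, fun i => ?_, fun i j hij => horth j i hij.symm⟩
  have := (isFiniteLength_iff_isNoetherian_isArtinian.mp (hfl i)).1
  refine (isBrick_of_extVanish_self hher (hfl i) (hind i) (hN i i)).quotient ?_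
    fun f => hlift i i (f ∘ₗ (LinearMap.range (u i)).mkQ)
  exact fun htop => (hind i).1 (hnorm.subsingleton_of_generates i
    ((hUadd i).generates.of_surjective (LinearMap.range_eq_top.mp htop)))

/-- For `i ≠ j` every homomorphism `Δ(j) → Δ(i)` between the cokernels of the minimal
right approximations is zero; hence the `Δ(i)` form an antichain. -/
theorem stmt4 (k : Type) [CommRing k] [IsArtinianRing k]
    (Λ : Type) [Ring Λ] [Algebra k Λ] (hart : IsFiniteLength k Λ)
    (hher : IsHereditaryRing Λ)
    (t : ℕ) (Nf : Fin t → Type) [∀ i, AddCommGroup (Nf i)] [∀ i, Module Λ (Nf i)]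
    (hfl : ∀ i, IsFiniteLength Λ (Nf i)) (hind : ∀ i, Indec Λ (Nf i))
    (hnorm : IsNormal Λ (∀ i, Nf i)) (hself : ExtVanish Λ (∀ i, Nf i) (∀ i, Nf i))
    (U : Fin t → Type) [∀ i, AddCommGroup (U i)] [∀ i, Module Λ (U i)]
    (u : ∀ i, U i →ₗ[Λ] Nf i)
    (hUadd : ∀ i, InAddFam Λ t Nf {j | j ≠ i} (U i))
    (happrox : ∀ i, ∀ (X : Type) [AddCommGroup X] [Module Λ X],
      InAddFam Λ t Nf {j | j ≠ i} X →
      ∀ f : X →ₗ[Λ] Nf i, ∃ h : X →ₗ[Λ] U i, (u i).comp h = f)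
    (hmin : ∀ i, ∀ h : U i →ₗ[Λ] U i, (u i).comp h = u i → Function.Bijective h) :
    (∀ i j, i ≠ j →
      ∀ f : (Nf j ⧸ LinearMap.range (u j)) →ₗ[Λ] (Nf i ⧸ LinearMap.range (u i)),
        f = 0) ∧
    IsAntichainFam Λ t (fun i => Nf i ⧸ LinearMap.range (u i)) :=
  stmt4_general Λ hher t Nf hfl hind hnorm hself U u hUadd happrox
end

section
/- Let Λ be a hereditary artin algebra and T a support-tilting module. Then the Ext-projective objects of the torsion class 𝒢(T) of modules generated by T are exactly the modules in add T. -/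
open CategoryTheory

/-!
If `M ∈ add T` and `C` is a quotient of `Tⁿ`, then `Ext¹(M, C) = 0`: `Ext¹(T, Tⁿ) = 0`, and since
`Λ` is hereditary, `Ext¹(T, -)` is right exact.

Conversely, let `M` be Ext-projective in `𝒢(T)`. As `Hom(T, M)` is finitely generated over `k`,
there is a right `add T`-approximation `u : Tʳ → M`, onto because `T` generates `M`. Its kernel `K`
satisfies `Ext¹(T, K) = 0` and is a module over the support algebra `Λ(T)`, over which `T` is
tilting; hence `K` is generated by `T` (Bongartz). Then `Ext¹(M, K) = 0`, so `u` splits and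
`M ∈ add T`. Since the support ideal is generated by idempotents, extensions of `Λ(T)`-modules are
again `Λ(T)`-modules, so `Ext¹` may be computed over `Λ` or over `Λ(T)` alike.
-/

section ExtVanish

open LinearMap

variable {A : Type} [Ring A] {M N : Type} [AddCommGroup M] [Module A M] [AddCommGroup N]
  [Module A N]

theorem LinearMap.exists_comp_eq_of_range_le {E Z : Type} [AddCommGroup E] [Module A E]
    [AddCommGroup Z] [Module A Z] {f : N →ₗ[A] E} (hf : Function.Injective f) {φ : Z →ₗ[A] E}
    (hφ : range φ ≤ range f) : ∃ ψ : Z →ₗ[A] N, f ∘ₗ ψ = φ :=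
  ⟨(LinearEquiv.ofInjective f hf).symm ∘ₗ φ.codRestrict (range f) fun z => hφ (mem_range_self φ z),
    LinearMap.ext fun z => by simp⟩

theorem LinearMap.exists_comp_eq_of_comp_eq_zero {E Z : Type} [AddCommGroup E] [Module A E]
    [AddCommGroup Z] [Module A Z] {f : N →ₗ[A] E} {g : E →ₗ[A] M} (hg : Function.Surjective g)
    (hr : range f = ker g) {φ : E →ₗ[A] Z} (hφ : φ ∘ₗ f = 0) : ∃ ψ : M →ₗ[A] Z, ψ ∘ₗ g = φ :=
  ⟨(range f).liftQ φ (range_le_ker_iff.mpr hφ) ∘ₗ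
      ((LinearMap.exact_iff.mpr hr.symm).linearEquivOfSurjective hg).symm,
    LinearMap.ext fun e => by simp⟩

theorem extVanish_iff_forall_exists_retraction :
    ExtVanish A M N ↔ ∀ (E : Type) [AddCommGroup E] [Module A E] (f : N →ₗ[A] E) (g : E →ₗ[A] M),
      Function.Injective f → Function.Surjective g → range f = ker g →
      ∃ r : E →ₗ[A] N, r ∘ₗ f = LinearMap.id := by
  constructor <;> intro h E _ _ f g hf hg hr <;>
    have := ((LinearMap.exact_iff.mpr hr.symm).split_tfae hf hg).out 0 1
  exacts [this.mp (h E f g hf hg hr), this.mpr (h E f g hf hg hr)]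

/-- The pushout of `0 → Q → X → M → 0` along `h` splits. -/
theorem ExtVanish.exists_extension {Q X : Type} [AddCommGroup Q] [Module A Q] [AddCommGroup X]
    [Module A X] (hMN : ExtVanish A M N) {f : Q →ₗ[A] X} {g : X →ₗ[A] M}
    (hf : Function.Injective f) (hg : Function.Surjective g) (hr : range f = ker g)
    (h : Q →ₗ[A] N) : ∃ η : X →ₗ[A] N, η ∘ₗ f = h := by
  have hgf : ∀ q, g (f q) = 0 := fun q => (hr ▸ mem_range_self f q : f q ∈ ker g)
  let W := range (h.prod (-f))
  let i : N →ₗ[A] (N × X) ⧸ W := W.mkQ ∘ₗ inl A N X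
  let j : X →ₗ[A] (N × X) ⧸ W := W.mkQ ∘ₗ inr A N X
  let q : (N × X) ⧸ W →ₗ[A] M := W.liftQ (g ∘ₗ snd A N X) (by
    rintro _ ⟨x, rfl⟩
    simp [hgf])
  have hjf : j ∘ₗ f = i ∘ₗ h := by
    ext x
    simp only [i, j, coe_comp, Function.comp_apply, Submodule.mkQ_apply, inr_apply, inl_apply]
    exact (Submodule.Quotient.eq W).mpr ⟨-x, by simp⟩
  have hi : Function.Injective i := by
    refine (injective_iff_map_eq_zero i).mpr fun n hn => ?_
    obtain ⟨x, hx⟩ := (Submodule.Quotient.mk_eq_zero W).mp hn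
    have hx0 : x = 0 := hf (by simpa using congrArg Prod.snd hx)
    simpa [hx0] using (congrArg Prod.fst hx).symm
  have hq : Function.Surjective q := fun m => by
    obtain ⟨x, rfl⟩ := hg m
    exact ⟨j x, rfl⟩
  have hiq : range i = ker q := by
    refine le_antisymm (by rintro _ ⟨n, rfl⟩; simp [i, q]) fun z hz => ?_
    obtain ⟨⟨n, x⟩, rfl⟩ := W.mkQ_surjective z
    obtain ⟨y, rfl⟩ : x ∈ range f := hr ▸ (by simpa [q] using hz)
    refine ⟨n + h y, (Submodule.Quotient.eq W).mpr ⟨y, by simp⟩⟩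
  obtain ⟨ρ, hρ⟩ := extVanish_iff_forall_exists_retraction.mp hMN _ i q hi hq hiq
  exact ⟨ρ ∘ₗ j, by rw [comp_assoc, hjf, ← comp_assoc, hρ, id_comp]⟩

/-- The pullback of `0 → N → E → M' → 0` along `φ` splits. -/
theorem ExtVanish.exists_lift_s10 {E M' : Type} [AddCommGroup E] [Module A E] [AddCommGroup M']
    [Module A M'] (hMN : ExtVanish A M N) {f : N →ₗ[A] E} {g : E →ₗ[A] M'}
    (hf : Function.Injective f) (hg : Function.Surjective g) (hr : range f = ker g)
    (φ : M →ₗ[A] M') : ∃ σ : M →ₗ[A] E, g ∘ₗ σ = φ := by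
  have hgf : ∀ n, g (f n) = 0 := fun n => (hr ▸ mem_range_self f n : f n ∈ ker g)
  let P := ker (g ∘ₗ fst A E M - φ ∘ₗ snd A E M)
  let i : N →ₗ[A] P := (inl A E M ∘ₗ f).codRestrict P fun n => by simp [P, hgf]
  let p : P →ₗ[A] M := snd A E M ∘ₗ P.subtype
  have hi : Function.Injective i := fun a b hab =>
    hf (congrArg Prod.fst (congrArg Subtype.val hab))
  have hp : Function.Surjective p := fun m => by
    obtain ⟨e, he⟩ := hg (φ m)
    exact ⟨⟨(e, m), by simp [P, he]⟩, rfl⟩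
  have hip : range i = ker p := by
    refine le_antisymm (by rintro _ ⟨n, rfl⟩; rfl) ?_
    rintro ⟨⟨e, m⟩, hem⟩ (hm : m = 0)
    subst hm
    obtain ⟨n, rfl⟩ : e ∈ range f := hr ▸ (by simpa [P] using hem)
    exact ⟨n, rfl⟩
  obtain ⟨s, hs⟩ := hMN P i p hi hp hip
  refine ⟨fst A E M ∘ₗ P.subtype ∘ₗ s, LinearMap.ext fun m => ?_⟩
  have hsm : ((s m : P) : E × M).2 = m := LinearMap.congr_fun hs m
  have hmem : g ((s m : P) : E × M).1 = φ ((s m : P) : E × M).2 :=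
    sub_eq_zero.mp (s m).2
  simpa [hsm] using hmem

theorem ExtVanish.pi_right_s10 (hMN : ExtVanish A M N) (ι : Type) : ExtVanish A M (ι → N) := by
  refine extVanish_iff_forall_exists_retraction.mpr fun E _ _ f g hf hg hr => ?_
  choose η hη using fun i => hMN.exists_extension hf hg hr (proj i)
  exact ⟨pi η, LinearMap.ext fun v => funext fun i => LinearMap.congr_fun (hη i) v⟩

theorem ExtVanish.of_inAdd_left {T : Type} [AddCommGroup T] [Module A T] (hTN : ExtVanish A T N)
    (hM : InAdd A T M) : ExtVanish A M N := by
  classical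
  obtain ⟨m, ι, p, hpι⟩ := hM
  intro E _ _ f g hf hg hr
  choose σ hσ using fun i => hTN.exists_lift_s10 hf hg hr (p ∘ₗ single A (fun _ => T) i)
  refine ⟨(∑ i, σ i ∘ₗ proj i) ∘ₗ ι, LinearMap.ext fun x => ?_⟩
  have hσ' : ∀ i t, g (σ i t) = p (Pi.single i t) := fun i => LinearMap.congr_fun (hσ i)
  calc g ((∑ i, σ i ∘ₗ proj i) (ι x)) = ∑ i, p (Pi.single i (ι x i)) := by
        simp [LinearMap.sum_apply, hσ']
    _ = x := by rw [← map_sum, Finset.univ_sum_single]; exact LinearMap.congr_fun hpι x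

/-- With `Ω = ker (Aˢ ↠ M)` projective, the map `Ω → C` lifts to `N` and then extends to `Aˢ`;
correcting a lift `Aˢ → E` of `Aˢ ↠ M` by it gives a map vanishing on `Ω`, i.e. a section. -/
theorem ExtVanish.of_surjective_right_s10 (hher : IsHereditaryRing A) [Module.Finite A M]
    (hMN : ExtVanish A M N) {C : Type} [AddCommGroup C] [Module A C] (w : N →ₗ[A] C)
    (hw : Function.Surjective w) : ExtVanish A M C := by
  intro E _ _ f g hf hg hr
  have hgf : g ∘ₗ f = 0 := (LinearMap.exact_iff.mpr hr.symm).linearMap_comp_eq_zero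
  obtain ⟨s, ρ, hρ⟩ := Module.Finite.exists_fin' A M
  let Ω := ker ρ
  have : Module.Projective A Ω := hher _ inferInstance Ω
  obtain ⟨α, hα⟩ := Module.projective_lifting_property g ρ hg
  obtain ⟨β, hβ⟩ := exists_comp_eq_of_range_le hf (φ := α ∘ₗ Ω.subtype) <| by
    rintro _ ⟨ω, rfl⟩
    rw [hr, mem_ker, ← LinearMap.comp_apply, ← comp_assoc, hα]
    exact ω.2
  obtain ⟨β', hβ'⟩ := Module.projective_lifting_property w β hw
  obtain ⟨γ, hγ⟩ := hMN.exists_extension Ω.injective_subtype hρ Ω.range_subtype β'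
  obtain ⟨σ, hσ⟩ := exists_comp_eq_of_comp_eq_zero hρ Ω.range_subtype
    (φ := α - f ∘ₗ w ∘ₗ γ) <| by
      rw [sub_comp, comp_assoc, comp_assoc, hγ, hβ', hβ, sub_self]
  refine ⟨σ, (cancel_right hρ).mp ?_⟩
  rw [comp_assoc, hσ, comp_sub, hα, ← comp_assoc, hgf, zero_comp, sub_zero, id_comp]

/-- A retraction `E → ker u` is `ρ - φ ∘ g`, where `ρ : E → X` extends the inclusion `ker u → X`
and `φ : T → X` lifts the map `T → M` induced by `u ∘ ρ`. -/
theorem ExtVanish.ker_of_forall_exists_comp_eq {T X : Type} [AddCommGroup T] [Module A T]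
    [AddCommGroup X] [Module A X] (hTX : ExtVanish A T X) (u : X →ₗ[A] M)
    (hu : ∀ h : T →ₗ[A] M, ∃ φ : T →ₗ[A] X, u ∘ₗ φ = h) : ExtVanish A T (ker u) := by
  refine extVanish_iff_forall_exists_retraction.mpr fun E _ _ f g hf hg hr => ?_
  obtain ⟨ρ, hρ⟩ := hTX.exists_extension hf hg hr (ker u).subtype
  obtain ⟨ψ, hψ⟩ := exists_comp_eq_of_comp_eq_zero hg hr (φ := u ∘ₗ ρ) <| by
    rw [comp_assoc, hρ, comp_ker_subtype]
  obtain ⟨φ, rfl⟩ := hu ψ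
  have hgf : ∀ n, g (f n) = 0 := fun n => (hr ▸ mem_range_self f n : f n ∈ ker g)
  refine ⟨(ρ - φ ∘ₗ g).codRestrict (ker u) fun e => ?_, LinearMap.ext fun n => Subtype.ext ?_⟩
  · simpa [sub_eq_zero] using (LinearMap.congr_fun hψ e).symm
  · simpa [hgf] using LinearMap.congr_fun hρ n

end ExtVanish

section Generates

open LinearMap

variable {A : Type} [Ring A] {T X K : Type} [AddCommGroup T] [Module A T] [AddCommGroup X]
  [Module A X] [AddCommGroup K] [Module A K]

theorem InAdd.generates (h : InAdd A T X) : Generates A T X := by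
  obtain ⟨m, ι, p, hpι⟩ := h
  exact ⟨m, p, fun x => ⟨ι x, LinearMap.congr_fun hpι x⟩⟩

theorem Generates.trans (hTX : Generates A T X) (hXK : Generates A X K) : Generates A T K := by
  obtain ⟨m, u, hu⟩ := hTX
  obtain ⟨s, v, hv⟩ := hXK
  let e : (Fin (s * m) → T) ≃ₗ[A] (Fin s → Fin m → T) :=
    LinearEquiv.funCongrLeft A T finProdFinEquiv ≪≫ₗ LinearEquiv.curry A T (Fin s) (Fin m)
  exact ⟨s * m, v ∘ₗ piMap (fun _ => u) ∘ₗ e,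
    hv.comp ((Function.Surjective.piMap fun _ => hu).comp e.surjective)⟩

theorem Generates.surjective_of_forall_exists_comp_eq (hTK : Generates A T K) (u : X →ₗ[A] K)
    (hu : ∀ h : T →ₗ[A] K, ∃ φ : T →ₗ[A] X, u ∘ₗ φ = h) : Function.Surjective u := by
  classical
  obtain ⟨n, g, hg⟩ := hTK
  choose φ hφ using fun i => hu (g ∘ₗ single A (fun _ => T) i)
  have hφ' : ∀ i t, u (φ i t) = g (Pi.single i t) := fun i => LinearMap.congr_fun (hφ i)
  intro x
  obtain ⟨v, rfl⟩ := hg x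
  refine ⟨∑ i, φ i (v i), ?_⟩
  calc u (∑ i, φ i (v i)) = ∑ i, g (Pi.single i (v i)) := by simp [hφ']
    _ = g v := by rw [← map_sum, Finset.univ_sum_single]

/-- Take `0 → A → X → Y → 0` with `X, Y ∈ add T`: as `Ext¹(Y, K) = 0`, every map `A → K` extends
to `X`, so `K` is a quotient of copies of `X`. -/
theorem IsTiltingMod.generates_of_extVanish [Module.Finite A K] (hT : IsTiltingMod A T)
    (hTK : ExtVanish A T K) : Generates A T K := by
  classical
  obtain ⟨-, X, Y, hX, hY, f₀, g₀, hf₀, hg₀, hr₀⟩ := hT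
  obtain ⟨s, ρ, hρ⟩ := Module.Finite.exists_fin' A K
  choose η hη using fun j => (hTK.of_inAdd_left hY).exists_extension hf₀ hg₀ hr₀
    (ρ ∘ₗ single A (fun _ => A) j)
  have hη' : ∀ j a, η j (f₀ a) = ρ (Pi.single j a) := fun j => LinearMap.congr_fun (hη j)
  refine hX.generates.trans ⟨s, ∑ j, η j ∘ₗ proj j, fun κ => ?_⟩
  obtain ⟨v, rfl⟩ := hρ κ
  refine ⟨fun j => f₀ (v j), ?_⟩
  calc (∑ j, η j ∘ₗ proj j) (fun j => f₀ (v j)) = ∑ j, ρ (Pi.single j (v j)) := by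
        simp [LinearMap.sum_apply, hη']
    _ = ρ v := by rw [← map_sum, Finset.univ_sum_single]

end Generates

section Approximation

variable {Λ : Type} [Ring Λ] {T M : Type} [AddCommGroup T] [Module Λ T] [AddCommGroup M]
  [Module Λ M]

theorem Module.Finite.linearMap_of_isNoetherianRing (k : Type) [CommRing k] [IsNoetherianRing k]
    [Module k M] [SMulCommClass Λ k M] [Module.Finite Λ T] [Module.Finite k M] :
    Module.Finite k (T →ₗ[Λ] M) := by
  obtain ⟨n, ρ, hρ⟩ := Module.Finite.exists_fin' Λ T
  exact Module.Finite.of_injective (LinearMap.lcomp k M ρ) fun _ _ h =>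
    (LinearMap.cancel_right hρ).mp h

/-- `u` is assembled from a finite family generating `Hom(T, M)` over `k`. -/
theorem Generates.exists_surjective_forall_exists_comp_eq (k : Type) [CommRing k]
    [IsNoetherianRing k] [Algebra k Λ] [Module.Finite k Λ] [Module.Finite Λ T] [Module.Finite Λ M]
    (hTM : Generates Λ T M) :
    ∃ (r : ℕ) (u : (Fin r → T) →ₗ[Λ] M), Function.Surjective u ∧
      ∀ h : T →ₗ[Λ] M, ∃ φ : T →ₗ[Λ] (Fin r → T), u ∘ₗ φ = h := by
  let _ : Module k T := Module.compHom T (algebraMap k Λ)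
  let _ : Module k M := Module.compHom M (algebraMap k Λ)
  have : IsScalarTower k Λ T := .of_algebraMap_smul fun _ _ => rfl
  have : IsScalarTower k Λ M := .of_algebraMap_smul fun _ _ => rfl
  have : Module.Finite k M := Module.Finite.trans Λ M
  have := Module.Finite.linearMap_of_isNoetherianRing (Λ := Λ) (T := T) (M := M) k
  obtain ⟨r, fam, hfam⟩ := Module.Finite.exists_fin (R := k) (M := T →ₗ[Λ] M)
  have hlift : ∀ h : T →ₗ[Λ] M, ∃ φ : T →ₗ[Λ] (Fin r → T),
      (∑ i, fam i ∘ₗ LinearMap.proj i) ∘ₗ φ = h := by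
    intro h
    obtain ⟨c, rfl⟩ := (Submodule.mem_span_range_iff_exists_fun k).mp
      (hfam ▸ Submodule.mem_top : h ∈ Submodule.span k (Set.range fam))
    refine ⟨LinearMap.pi fun i => c i • LinearMap.id, LinearMap.ext fun t => ?_⟩
    simp [LinearMap.sum_apply]
  exact ⟨r, _, hTM.surjective_of_forall_exists_comp_eq _ hlift, hlift⟩

end Approximation

section SupportIdeal

variable (Λ : Type) [Ring Λ] (T : Type) [AddCommGroup T] [Module Λ T]

/-- `Λ ⧸ supportIdeal Λ T` is the support algebra `Λ(T)`. -/
def supportIdeal : Ideal Λ where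
  carrier := {a | InSupportIdeal Λ T a}
  zero_mem' := ⟨0, 0, 0, 0, finZeroElim, by simp⟩
  add_mem' := by
    rintro _ _ ⟨n, x, y, e, he, rfl⟩ ⟨n', x', y', e', he', rfl⟩
    refine ⟨n + n', Fin.append x x', Fin.append y y', Fin.append e e',
      Fin.addCases (by simpa using he) (by simpa using he'), ?_⟩
    simp [Fin.sum_univ_add]
  smul_mem' := by
    rintro c _ ⟨n, x, y, e, he, rfl⟩
    exact ⟨n, fun i => c * x i, y, e, he, by simp [Finset.mul_sum, mul_assoc]⟩

instance : (supportIdeal Λ T).IsTwoSided where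
  mul_mem_of_left := by
    rintro _ c ⟨n, x, y, e, he, rfl⟩
    exact ⟨n, x, fun i => y i * c, e, he, by simp [Finset.sum_mul, mul_assoc]⟩

variable {Λ T} {W : Type} [AddCommGroup W] [Module Λ W]

theorem isTorsionBySet_supportIdeal_of_forall
    (h : ∀ e : Λ, IsIdempotentElem e → (∀ t : T, e • t = 0) → ∀ w : W, e • w = 0) :
    Module.IsTorsionBySet Λ W (supportIdeal Λ T) := by
  rintro w ⟨_, n, x, y, e, he, rfl⟩
  simp [Finset.sum_smul, mul_smul, h _ (he _).1 (he _).2]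

theorem isTorsionBySet_supportIdeal : Module.IsTorsionBySet Λ T (supportIdeal Λ T) :=
  isTorsionBySet_supportIdeal_of_forall fun _ _ h => h

theorem IsIdempotentElem.smul_eq_zero_of_range_eq_ker {e : Λ} (he : IsIdempotentElem e)
    {N M : Type} [AddCommGroup N] [Module Λ N] [AddCommGroup M] [Module Λ M] {f : N →ₗ[Λ] W}
    {g : W →ₗ[Λ] M} (hr : LinearMap.range f = LinearMap.ker g) (hN : ∀ n : N, e • n = 0)
    (hM : ∀ m : M, e • m = 0) (w : W) : e • w = 0 := by
  obtain ⟨n, hn⟩ : e • w ∈ LinearMap.range f := hr ▸ (by simp [hM] : e • w ∈ LinearMap.ker g)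
  rw [← he.eq, mul_smul, ← hn, ← map_smul, hN, map_zero]

theorem isTorsionBySet_supportIdeal_of_range_eq_ker {N M : Type} [AddCommGroup N] [Module Λ N]
    [AddCommGroup M] [Module Λ M] {f : N →ₗ[Λ] W} {g : W →ₗ[Λ] M}
    (hr : LinearMap.range f = LinearMap.ker g) (hN : Module.IsTorsionBySet Λ N (supportIdeal Λ T))
    (hM : Module.IsTorsionBySet Λ M (supportIdeal Λ T)) :
    Module.IsTorsionBySet Λ W (supportIdeal Λ T) :=
  isTorsionBySet_supportIdeal_of_forall fun e he heT => by
    have hI : e ∈ supportIdeal Λ T := ⟨1, 1, 1, fun _ => e, fun _ => ⟨he, heT⟩, by simp⟩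
    exact he.smul_eq_zero_of_range_eq_ker hr (fun _ => hN (a := ⟨e, hI⟩)) fun _ =>
      hM (a := ⟨e, hI⟩)

end SupportIdeal

section QuotientScalars

variable {Λ : Type} [Ring Λ] {I : Ideal Λ} [I.IsTwoSided] {W₁ W₂ : Type}
  [AddCommGroup W₁] [Module Λ W₁] [Module (Λ ⧸ I) W₁] [IsScalarTower Λ (Λ ⧸ I) W₁]
  [AddCommGroup W₂] [Module Λ W₂] [Module (Λ ⧸ I) W₂] [IsScalarTower Λ (Λ ⧸ I) W₂]

theorem Ideal.Quotient.mk_smul_of_isScalarTower (a : Λ) (x : W₁) :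
    Ideal.Quotient.mk I a • x = a • x := by
  rw [← smul_one_smul (Λ ⧸ I) a x]
  exact congrArg (· • x) (congrArg (Ideal.Quotient.mk I) (mul_one a).symm)

def LinearMap.extendScalarsToQuotient (f : W₁ →ₗ[Λ] W₂) : W₁ →ₗ[Λ ⧸ I] W₂ where
  toFun := f
  map_add' := f.map_add
  map_smul' r x := by
    obtain ⟨a, rfl⟩ := Ideal.Quotient.mk_surjective r
    simp [Ideal.Quotient.mk_smul_of_isScalarTower]

theorem ExtVanish.quotient (h : ExtVanish Λ W₁ W₂) : ExtVanish (Λ ⧸ I) W₁ W₂ := by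
  intro E _ _ f g hf hg hr
  let _ : Module Λ E := Module.compHom E (Ideal.Quotient.mk I)
  have : IsScalarTower Λ (Λ ⧸ I) E := ⟨fun a r e => by
    obtain ⟨b, rfl⟩ := Ideal.Quotient.mk_surjective r
    show Ideal.Quotient.mk I (a * b) • e = Ideal.Quotient.mk I a • Ideal.Quotient.mk I b • e
    rw [map_mul, mul_smul]⟩
  obtain ⟨s, hs⟩ := h E (f.restrictScalars Λ) (g.restrictScalars Λ) hf hg <| by
    rw [LinearMap.range_restrictScalars, LinearMap.ker_restrictScalars, hr]
  exact ⟨s.extendScalarsToQuotient, LinearMap.ext fun x => (LinearMap.congr_fun hs x :)⟩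

theorem ExtVanish.of_quotient
    (hI : ∀ (E : Type) [AddCommGroup E] [Module Λ E] (f : W₂ →ₗ[Λ] E) (g : E →ₗ[Λ] W₁),
      LinearMap.range f = LinearMap.ker g → Module.IsTorsionBySet Λ E I)
    (h : ExtVanish (Λ ⧸ I) W₁ W₂) : ExtVanish Λ W₁ W₂ := by
  intro E _ _ f g hf hg hr
  have hE := hI E f g hr
  let _ := hE.module
  have : IsScalarTower Λ (Λ ⧸ I) E := hE.isScalarTower
  obtain ⟨s, hs⟩ := h E f.extendScalarsToQuotient g.extendScalarsToQuotient hf hg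
    (SetLike.ext fun x => SetLike.ext_iff.mp hr x)
  exact ⟨s.restrictScalars Λ, LinearMap.ext fun x => (LinearMap.congr_fun hs x :)⟩

theorem Generates.of_quotient (h : Generates (Λ ⧸ I) W₁ W₂) : Generates Λ W₁ W₂ := by
  obtain ⟨n, g, hg⟩ := h
  exact ⟨n, g.restrictScalars Λ, hg⟩

end QuotientScalars

section SupportTilting

variable {Λ : Type} [Ring Λ] {T : Type} [AddCommGroup T] [Module Λ T]

theorem IsSupportTilting.isTiltingMod [Module (Λ ⧸ supportIdeal Λ T) T]
    [IsScalarTower Λ (Λ ⧸ supportIdeal Λ T) T] (hT : IsSupportTilting Λ T) :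
    IsTiltingMod (Λ ⧸ supportIdeal Λ T) T :=
  hT _ (Ideal.Quotient.mk _) Ideal.Quotient.mk_surjective
    (fun _ => Ideal.Quotient.eq_zero_iff_mem) fun a x =>
      (Ideal.Quotient.mk_smul_of_isScalarTower a x).symm

theorem IsSupportTilting.extVanish_self (hT : IsSupportTilting Λ T) : ExtVanish Λ T T := by
  have hT' : Module.IsTorsionBySet Λ T (supportIdeal Λ T) := isTorsionBySet_supportIdeal
  let _ := hT'.module
  have : IsScalarTower Λ (Λ ⧸ supportIdeal Λ T) T := hT'.isScalarTower
  exact hT.isTiltingMod.1.of_quotient fun _ _ _ _ _ hr =>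
    isTorsionBySet_supportIdeal_of_range_eq_ker hr hT' hT'

theorem IsSupportTilting.generates_of_extVanish {K : Type} [AddCommGroup K] [Module Λ K]
    [Module.Finite Λ K] (hT : IsSupportTilting Λ T)
    (hK : Module.IsTorsionBySet Λ K (supportIdeal Λ T)) (hTK : ExtVanish Λ T K) :
    Generates Λ T K := by
  have hT' : Module.IsTorsionBySet Λ T (supportIdeal Λ T) := isTorsionBySet_supportIdeal
  let _ := hT'.module
  have : IsScalarTower Λ (Λ ⧸ supportIdeal Λ T) T := hT'.isScalarTower
  let _ := hK.module
  have : IsScalarTower Λ (Λ ⧸ supportIdeal Λ T) K := hK.isScalarTower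
  have : Module.Finite (Λ ⧸ supportIdeal Λ T) K := .of_restrictScalars_finite Λ _ K
  exact (hT.isTiltingMod.generates_of_extVanish hTK.quotient).of_quotient

end SupportTilting

/-- For a support-tilting module `T`, the Ext-projective objects of the torsion class
`𝒢(T)` are exactly the modules in `add T`. -/
theorem stmt10 (k : Type) [CommRing k] [IsArtinianRing k]
    (Λ : Type) [Ring Λ] [Algebra k Λ] (hart : IsFiniteLength k Λ)
    (hher : IsHereditaryRing Λ)
    (T : Type) [AddCommGroup T] [Module Λ T] (hTfl : IsFiniteLength Λ T)
    (hT : IsSupportTilting Λ T) :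
    ∀ M : ModuleCat.{0} Λ, IsFiniteLength Λ M →
      ((Generates Λ T M ∧
        ∀ C : ModuleCat.{0} Λ, IsFiniteLength Λ C → Generates Λ T C →
          ExtVanish Λ M C) ↔ InAdd Λ T M) := by
  have : IsNoetherian k Λ := (isFiniteLength_iff_isNoetherian_isArtinian.mp hart).1
  have : IsNoetherian Λ T := (isFiniteLength_iff_isNoetherian_isArtinian.mp hTfl).1
  have : IsArtinian Λ T := (isFiniteLength_iff_isNoetherian_isArtinian.mp hTfl).2
  have hTT := hT.extVanish_self
  intro M hM
  have : IsNoetherian Λ M := (isFiniteLength_iff_isNoetherian_isArtinian.mp hM).1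
  refine ⟨fun ⟨hTM, hMproj⟩ => ?_, fun hMadd => ⟨hMadd.generates, fun C _ hTC => ?_⟩⟩
  · obtain ⟨r, u, hu, hlift⟩ := hTM.exists_surjective_forall_exists_comp_eq k
    have hK : Module.IsTorsionBySet Λ (LinearMap.ker u) (supportIdeal Λ T) :=
      isTorsionBySet_supportIdeal_of_forall fun _ _ heT _ => Subtype.ext (funext fun _ => heT _)
    have hTK := (hTT.pi_right_s10 _).ker_of_forall_exists_comp_eq u hlift
    obtain ⟨s, hs⟩ := hMproj (ModuleCat.of Λ (LinearMap.ker u))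
      (isFiniteLength_iff_isNoetherian_isArtinian.mpr ⟨inferInstance, inferInstance⟩)
      (hT.generates_of_extVanish hK hTK) _ _ u (LinearMap.ker u).injective_subtype hu
      (LinearMap.ker u).range_subtype
    exact ⟨r, s, u, hs⟩
  · obtain ⟨n, w, hw⟩ := hTC
    exact ((hTT.pi_right_s10 _).of_surjective_right_s10 hher w hw).of_inAdd_left hMadd
end
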